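/- Under the standing setup, suppose the lengths of the 2-blocks in the orbit tree of the dual of A are bounded with supremum N. Then for every orbital word w over Q of length at least c+N+1, the three words w x, x ∈ Q, lie in three pairwise distinct orbits of Q^{|w|+1} (each edge from level c+N or below on an e2-liftable path is followed by three edges). -/

import Mathlib

namespace MealyFormal

variable {Q X : Type*}

/-- Extended transition function of the dual automaton: the action of a letter
`i ∈ Σ` on words over the stateset `Q`, defined by
`δ_i(ε) = ε` and `δ_i(x w) = δ_i(x) δ_{ρ_x(i)}(w)`. -/
def dExt (δ : X → Q → Q) (ρ : Q → X → X) : X → List Q → List Q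
  | _, [] => []
  | i, x :: w => δ i x :: dExt δ ρ (ρ x i) w

/-- The action `δ_s = δ_{s_n} ∘ ⋯ ∘ δ_{s_1}` of a word `s` over `Σ` on words over `Q`. -/
def dWord (δ : X → Q → Q) (ρ : Q → X → X) : List X → List Q → List Q
  | [], u => u
  | i :: s, u => dWord δ ρ s (dExt δ ρ i u)

/-- Extended production function: the action of a state `x ∈ Q` on words over the
alphabet `Σ`, defined by `ρ_x(ε) = ε` and `ρ_x(i s) = ρ_x(i) ρ_{δ_i(x)}(s)`. -/
def rExt (δ : X → Q → Q) (ρ : Q → X → X) : Q → List X → List X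
  | _, [] => []
  | x, i :: s => ρ x i :: rExt δ ρ (δ i x) s

/-- The action `ρ_u = ρ_{x_n} ∘ ⋯ ∘ ρ_{x_1}` of a word `u = x_1⋯x_n` over `Q`
on words over `Σ`. -/
def rWord (δ : X → Q → Q) (ρ : Q → X → X) : List Q → List X → List X
  | [], s => s
  | x :: u, s => rWord δ ρ u (rExt δ ρ x s)

/-- `v` lies in the orbit of `u` under the action of the dual automaton. -/
def InOrbit (δ : X → Q → Q) (ρ : Q → X → X) (u v : List Q) : Prop :=
  ∃ s : List X, dWord δ ρ s u = v

/-- The orbit (connected component of the corresponding power) of a word over `Q`. -/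
def orbit (δ : X → Q → Q) (ρ : Q → X → X) (u : List Q) : Set (List Q) :=
  {v | InOrbit δ ρ u v}

/-- The action of the dual automaton on `Q^n` is transitive, i.e. `A^n` is connected. -/
def LevelTransitive (δ : X → Q → Q) (ρ : Q → X → X) (n : ℕ) : Prop :=
  ∀ u v : List Q, u.length = n → v.length = n → InOrbit δ ρ u v

/-- The label `ℓ(u x)` of the nonempty word `u x`:
the number of `z ∈ Q` with `u z` in the orbit of `u x`. -/
noncomputable def label (δ : X → Q → Q) (ρ : Q → X → X) (u : List Q) (x : Q) : ℕ :=
  Set.ncard {z : Q | InOrbit δ ρ (u ++ [x]) (u ++ [z])}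

/-- Prefix of length `i` of the (infinite) word `w = w_1 w_2 ⋯`. -/
def pref (w : ℕ → Q) (i : ℕ) : List Q := (List.range i).map w

/-- The `n`-th power `u^n` of a word `u`. -/
def wpow (u : List Q) (n : ℕ) : List Q := (List.replicate n u).flatten

/-- The group generated by the Mealy automaton: the subgroup of permutations of `Σ*`
generated by the production functions `ρ_x`, `x ∈ Q`. -/
def autGroup (δ : X → Q → Q) (ρ : Q → X → X) : Subgroup (Equiv.Perm (List X)) :=
  Subgroup.closure {π : Equiv.Perm (List X) | ∃ q : Q, ⇑π = rExt δ ρ q}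

/-- The semigroup of maps `Σ* → Σ*` generated under composition by the `ρ_x`, `x ∈ Q`. -/
def prodSemigroup (δ : X → Q → Q) (ρ : Q → X → X) :
    Subsemigroup (Function.End (List X)) :=
  Subsemigroup.closure {f : Function.End (List X) | ∃ q : Q, f = rExt δ ρ q}

/-- The semigroup of maps `Q* → Q*` generated under composition by the `δ_i`, `i ∈ Σ`. -/
def dualSemigroup (δ : X → Q → Q) (ρ : Q → X → X) :
    Subsemigroup (Function.End (List Q)) :=
  Subsemigroup.closure {f : Function.End (List Q) | ∃ i : X, f = dExt δ ρ i}

/-- A word `w` over `Q` is orbital if all its factors of length `c+1`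
belong to the reduction orbit `O2`. -/
def Orbital (c : ℕ) (O2 : Set (List Q)) (w : List Q) : Prop :=
  ∀ f : List Q, f.length = c + 1 → f <:+: w → f ∈ O2

/-- A word is cyclically orbital if each of its powers is orbital. -/
def CycOrbital (c : ℕ) (O2 : Set (List Q)) (w : List Q) : Prop :=
  ∀ n : ℕ, Orbital c O2 (wpow w n)

/-- The standing setup: `A` is a connected invertible-reversible Mealy automaton
with 3 states, `0 < c = cd(A) < ∞`, and `Q^{c+1}` splits into exactly two orbits,
of sizes `2·3^c` and `3^c`; `O2` is the reduction orbit, of size `2·3^c`. -/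
structure StandingSetup (δ : X → Q → Q) (ρ : Q → X → X) (c : ℕ) (O2 : Set (List Q)) :
    Prop where
  card_three : Nat.card Q = 3
  invertible : ∀ q : Q, Function.Bijective (ρ q)
  reversible : ∀ i : X, Function.Bijective (δ i)
  connected : LevelTransitive δ ρ 1
  c_pos : 0 < c
  trans_c : LevelTransitive δ ρ c
  not_trans_succ : ¬ LevelTransitive δ ρ (c + 1)
  O2_is_orbit : ∃ w : List Q, w.length = c + 1 ∧ O2 = orbit δ ρ w
  O2_card : O2.ncard = 2 * 3 ^ c
  other_is_orbit : ∃ w : List Q, w.length = c + 1 ∧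
    orbit δ ρ w = {v : List Q | v.length = c + 1} \ O2
  other_card : ({v : List Q | v.length = c + 1} \ O2).ncard = 3 ^ c


section Aux

variable (δ : X → Q → Q) (ρ : Q → X → X)

/-- The letter that exits after a letter `i` is processed through the word `u`. -/
def outL (u : List Q) (i : X) : X := u.foldl (fun j x => ρ x j) i

@[simp] lemma outL_nil (i : X) : outL ρ [] i = i := rfl

@[simp] lemma outL_cons (x : Q) (u : List Q) (i : X) :
    outL ρ (x :: u) i = outL ρ u (ρ x i) := rfl

@[simp] lemma dExt_nil (i : X) : dExt δ ρ i [] = [] := rfl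

@[simp] lemma dExt_cons (i : X) (x : Q) (w : List Q) :
    dExt δ ρ i (x :: w) = δ i x :: dExt δ ρ (ρ x i) w := rfl

@[simp] lemma dWord_nil (u : List Q) : dWord δ ρ [] u = u := rfl

@[simp] lemma dWord_cons (i : X) (s : List X) (u : List Q) :
    dWord δ ρ (i :: s) u = dWord δ ρ s (dExt δ ρ i u) := rfl

lemma dExt_length (i : X) (w : List Q) : (dExt δ ρ i w).length = w.length := by
  induction w generalizing i with
  | nil => rfl
  | cons x w ih => simp [ih]

lemma dWord_length (s : List X) (u : List Q) : (dWord δ ρ s u).length = u.length := by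
  induction s generalizing u with
  | nil => rfl
  | cons i s ih => simp [ih, dExt_length]

lemma dExt_append (i : X) (u t : List Q) :
    dExt δ ρ i (u ++ t) = dExt δ ρ i u ++ dExt δ ρ (outL ρ u i) t := by
  induction u generalizing i with
  | nil => simp
  | cons x u ih => simp [ih]

/-- The word induced on the part of a word after the prefix `u`,
when the word `s` acts on a word with prefix `u`. -/
def gw : List Q → List X → List X
  | _, [] => []
  | u, i :: s => outL ρ u i :: gw (dExt δ ρ i u) s

@[simp] lemma gw_nil (u : List Q) : gw δ ρ u [] = [] := rfl

@[simp] lemma gw_cons (u : List Q) (i : X) (s : List X) :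
    gw δ ρ u (i :: s) = outL ρ u i :: gw δ ρ (dExt δ ρ i u) s := rfl

lemma dWord_append (s : List X) (u t : List Q) :
    dWord δ ρ s (u ++ t) = dWord δ ρ s u ++ dWord δ ρ (gw δ ρ u s) t := by
  induction s generalizing u t with
  | nil => simp
  | cons i s ih => simp [dExt_append, ih]

lemma dWord_concat (s s' : List X) (u : List Q) :
    dWord δ ρ (s ++ s') u = dWord δ ρ s' (dWord δ ρ s u) := by
  induction s generalizing u with
  | nil => simp
  | cons i s ih => simp [ih]

variable {δ ρ}

lemma dExt_injective (hrev : ∀ i : X, Function.Bijective (δ i)) (i : X) :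
    Function.Injective (dExt δ ρ i) := by
  intro w
  induction w generalizing i with
  | nil => intro w' h; cases w' <;> simp_all
  | cons x w ih =>
    intro w' h
    cases w' with
    | nil => simp_all
    | cons x' w' =>
      simp only [dExt_cons, List.cons.injEq] at h
      obtain ⟨h1, h2⟩ := h
      have hx : x = x' := (hrev i).injective h1
      subst hx
      exact congrArg _ (ih _ h2)

lemma dWord_injective (hrev : ∀ i : X, Function.Bijective (δ i)) (s : List X) :
    Function.Injective (dWord δ ρ s) := by
  induction s with
  | nil => intro a b h; simpa using h
  | cons i s ih => intro a b h; exact dExt_injective hrev i (ih h)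

lemma exists_singleton_dWord (s : List X) (z : Q) :
    ∃ ζ : Q, dWord δ ρ s [z] = [ζ] := by
  have := dWord_length δ ρ s [z]
  exact List.length_eq_one_iff.mp (by simpa using this)

lemma InOrbit.refl (u : List Q) : InOrbit δ ρ u u := ⟨[], rfl⟩

lemma InOrbit.trans {u v w : List Q} (h1 : InOrbit δ ρ u v) (h2 : InOrbit δ ρ v w) :
    InOrbit δ ρ u w := by
  obtain ⟨s, hs⟩ := h1; obtain ⟨t, ht⟩ := h2
  exact ⟨s ++ t, by rw [dWord_concat, hs, ht]⟩

lemma InOrbit.length_eq {u v : List Q} (h : InOrbit δ ρ u v) : v.length = u.length := by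
  obtain ⟨s, hs⟩ := h; rw [← hs, dWord_length]

lemma finite_len_subtype (n : ℕ) [Finite Q] : Finite {l : List Q // l.length = n} :=
  Finite.of_equiv _ (Equiv.vectorEquivFin Q n).symm

lemma InOrbit.symm [Finite Q] (hrev : ∀ i : X, Function.Bijective (δ i))
    {u v : List Q} (h : InOrbit δ ρ u v) : InOrbit δ ρ v u := by
  obtain ⟨s, hs⟩ := h
  haveI := finite_len_subtype (Q := Q) u.length
  set f : {l : List Q // l.length = u.length} → {l : List Q // l.length = u.length} :=
    fun l => ⟨dWord δ ρ s l.1, by rw [dWord_length]; exact l.2⟩ with hf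
  have hfinj : Function.Injective f := by
    intro a b hab
    exact Subtype.ext (dWord_injective hrev s (congrArg Subtype.val hab))
  -- every iterate of f is realized by some word
  have hiter : ∀ (k : ℕ) (l : {l : List Q // l.length = u.length}),
      ∃ t : List X, dWord δ ρ t l.1 = (f^[k] l).1 := by
    intro k
    induction k with
    | zero => exact fun l => ⟨[], rfl⟩
    | succ k ih =>
      intro l
      obtain ⟨t, ht⟩ := ih (f l)
      refine ⟨s ++ t, ?_⟩
      rw [dWord_concat]
      show dWord δ ρ t (f l).1 = (f^[k+1] l).1
      rw [ht, Function.iterate_succ_apply]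
  obtain ⟨m₁, m₂, hne, heq⟩ :=
    Finite.exists_ne_map_eq_of_infinite (fun m : ℕ => f^[m])
  wlog hlt : m₁ < m₂ generalizing m₁ m₂
  · exact this m₂ m₁ (Ne.symm hne) heq.symm (by omega)
  have hid : f^[m₂ - m₁] = id := by
    funext a
    have : f^[m₁] (f^[m₂ - m₁] a) = f^[m₁] (id a) := by
      rw [← Function.iterate_add_apply]
      have : m₁ + (m₂ - m₁) = m₂ := by omega
      rw [this, ← congrFun heq a]; rfl
    exact hfinj.iterate m₁ this
  have hd : 1 ≤ m₂ - m₁ := by omega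
  set d := m₂ - m₁
  -- v = f ⟨u⟩ ; apply f^[d-1] to v to get back u
  have hu : (⟨u, rfl⟩ : {l : List Q // l.length = u.length}).1 = u := rfl
  have hv : (f ⟨u, rfl⟩).1 = v := by rw [hf]; exact hs
  obtain ⟨t, ht⟩ := hiter (d - 1) (f ⟨u, rfl⟩)
  refine ⟨t, ?_⟩
  rw [hv] at ht
  rw [ht]
  have : f^[d-1] (f ⟨u, rfl⟩) = f^[d] ⟨u, rfl⟩ := by
    rw [← Function.iterate_succ_apply]
    congr 1
    omega
  rw [this, hid]
  rfl


lemma mem_orbit_iff {u v : List Q} : v ∈ orbit δ ρ u ↔ InOrbit δ ρ u v := Iff.rfl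

lemma orbit_eq [Finite Q] (hrev : ∀ i : X, Function.Bijective (δ i))
    {u v : List Q} (h : InOrbit δ ρ u v) : orbit δ ρ u = orbit δ ρ v := by
  ext m
  exact ⟨fun hm => (InOrbit.symm hrev h).trans hm, fun hm => h.trans hm⟩

lemma finite_setOf_len [Finite Q] (n : ℕ) : {l : List Q | l.length = n}.Finite := by
  haveI := finite_len_subtype (Q := Q) n
  exact Set.finite_coe_iff.mp (finite_len_subtype n)

lemma orbit_finite [Finite Q] (u : List Q) : (orbit δ ρ u).Finite :=
  (finite_setOf_len u.length).subset (fun v hv => InOrbit.length_eq hv)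

lemma ncard_setOf_len [Finite Q] (h3 : Nat.card Q = 3) (n : ℕ) :
    {l : List Q | l.length = n}.ncard = 3 ^ n := by
  rw [← Nat.card_coe_set_eq]
  have e : {l : List Q | l.length = n} ≃ (Fin n → Q) := Equiv.vectorEquivFin Q n
  rw [Nat.card_congr e, Nat.card_fun, h3]
  simp [Nat.card_eq_fintype_card]

/-- The label set of the node `u ++ [x]`. -/
def LSet (δ : X → Q → Q) (ρ : Q → X → X) (u : List Q) (x : Q) : Set Q :=
  {z : Q | InOrbit δ ρ (u ++ [x]) (u ++ [z])}

lemma label_eq_ncard_LSet (u : List Q) (x : Q) :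
    label δ ρ u x = (LSet δ ρ u x).ncard := rfl

lemma mem_LSet_self (u : List Q) (x : Q) : x ∈ LSet δ ρ u x := InOrbit.refl _

lemma orbit_concat_decomp {u : List Q} {x : Q} {W : List Q} (s : List X)
    (hW : dWord δ ρ s (u ++ [x]) = W) :
    ∃ ζ : Q, W = dWord δ ρ s u ++ [ζ] := by
  obtain ⟨ζ, hζ⟩ := exists_singleton_dWord (δ := δ) (ρ := ρ) (gw δ ρ u s) x
  exact ⟨ζ, by rw [← hW, dWord_append, hζ]⟩

lemma fiber_card_le [Finite Q] (S : Set (List Q))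
    (hcl : ∀ ⦃a b : List Q⦄, a ∈ S → InOrbit δ ρ a b → b ∈ S)
    {u u' : List Q} (h : InOrbit δ ρ u u') (hrev : ∀ i : X, Function.Bijective (δ i)) :
    {z : Q | u ++ [z] ∈ S}.ncard ≤ {z : Q | u' ++ [z] ∈ S}.ncard := by
  obtain ⟨s, hs⟩ := h
  have key : ∀ z : Q, ∃ ζ : Q, dWord δ ρ s (u ++ [z]) = u' ++ [ζ] := by
    intro z
    obtain ⟨ζ, hζ⟩ := orbit_concat_decomp (u := u) (x := z) s rfl
    exact ⟨ζ, by rw [hζ, hs]⟩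
  choose φ hφ using key
  apply Set.ncard_le_ncard_of_injOn φ
  · intro z hz
    exact hcl hz ⟨s, hφ z⟩
  · intro z₁ _ z₂ _ hz
    have h2 : dWord δ ρ s (u ++ [z₁]) = dWord δ ρ s (u ++ [z₂]) := by
      rw [hφ z₁, hφ z₂, hz]
    have h3 := dWord_injective hrev s h2
    simpa using (List.append_inj' h3 rfl).2

lemma fiber_card_eq [Finite Q] (S : Set (List Q))
    (hcl : ∀ ⦃a b : List Q⦄, a ∈ S → InOrbit δ ρ a b → b ∈ S)
    {u u' : List Q} (h : InOrbit δ ρ u u') (hrev : ∀ i : X, Function.Bijective (δ i)) :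
    {z : Q | u ++ [z] ∈ S}.ncard = {z : Q | u' ++ [z] ∈ S}.ncard :=
  le_antisymm (fiber_card_le S hcl h hrev)
    (fiber_card_le S hcl (InOrbit.symm hrev h) hrev)

lemma ncard_fiber_mul [Finite Q] (S B : Set (List Q)) (k : ℕ)
    (hS : S.Finite) (hB : B.Finite)
    (hne : ∀ W ∈ S, W ≠ ([] : List Q))
    (hproj : ∀ W ∈ S, W.dropLast ∈ B)
    (hfib : ∀ b ∈ B, {z : Q | b ++ [z] ∈ S}.ncard = k) :
    S.ncard = k * B.ncard := by
  classical
  set t : List Q → Finset (List Q) :=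
    fun b => (Set.toFinite {z : Q | b ++ [z] ∈ S}).toFinset.image (fun z => b ++ [z]) with ht
  have hS_eq : hS.toFinset = hB.toFinset.biUnion t := by
    ext W
    simp only [Set.Finite.mem_toFinset, Finset.mem_biUnion, ht, Finset.mem_image]
    constructor
    · intro hW
      refine ⟨W.dropLast, by simpa using hproj W hW, W.getLast (hne W hW), ?_, ?_⟩
      · simp only [Set.Finite.mem_toFinset, Set.mem_setOf_eq]
        rw [List.dropLast_concat_getLast (hne W hW)]; exact hW
      · exact List.dropLast_concat_getLast (hne W hW)
    · rintro ⟨b, hb, z, hz, rfl⟩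
      simpa using hz
  have hdisj : ∀ b₁ ∈ hB.toFinset, ∀ b₂ ∈ hB.toFinset, b₁ ≠ b₂ → Disjoint (t b₁) (t b₂) := by
    intro b₁ _ b₂ _ hne'
    simp only [Finset.disjoint_left, ht, Finset.mem_image]
    rintro W ⟨z, hz, rfl⟩ ⟨z', hz', hWeq⟩
    exact hne' (by simpa using (congrArg List.dropLast hWeq).symm)
  have hone : ∀ b ∈ hB.toFinset, (t b).card = k := by
    intro b hb
    rw [ht]
    simp only
    rw [Finset.card_image_of_injective _ (fun z z' h => by simpa using h)]
    rw [← Set.ncard_eq_toFinset_card _ (Set.toFinite _)]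
    exact hfib b (by simpa using hb)
  calc S.ncard = hS.toFinset.card := Set.ncard_eq_toFinset_card S hS
    _ = ∑ b ∈ hB.toFinset, (t b).card := by rw [hS_eq, Finset.card_biUnion hdisj]
    _ = ∑ _b ∈ hB.toFinset, k := Finset.sum_congr rfl hone
    _ = hB.toFinset.card * k := by rw [Finset.sum_const, smul_eq_mul]
    _ = k * B.ncard := by rw [Nat.mul_comm, Set.ncard_eq_toFinset_card B hB]

/-- `|orbit(u x)| = ℓ(u x) · |orbit(u)|`. -/
lemma orbit_ncard_concat [Finite Q] (hrev : ∀ i : X, Function.Bijective (δ i))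
    (u : List Q) (x : Q) :
    (orbit δ ρ (u ++ [x])).ncard = label δ ρ u x * (orbit δ ρ u).ncard := by
  have hcl : ∀ ⦃a b : List Q⦄, a ∈ orbit δ ρ (u ++ [x]) → InOrbit δ ρ a b →
      b ∈ orbit δ ρ (u ++ [x]) := fun a b ha hab => ha.trans hab
  apply ncard_fiber_mul
  · exact orbit_finite _
  · exact orbit_finite _
  · intro W hW
    have : W.length = u.length + 1 := by
      have := InOrbit.length_eq hW; simpa using this
    intro hWnil; rw [hWnil] at this; simp at this
  · rintro W ⟨s, hs⟩
    obtain ⟨ζ, hζ⟩ := orbit_concat_decomp s hs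
    rw [hζ, List.dropLast_concat]
    exact ⟨s, rfl⟩
  · intro b hb
    have := fiber_card_eq (orbit δ ρ (u ++ [x])) hcl (u := u) (u' := b) hb hrev
    rw [← this]
    rfl

variable {c : ℕ} {O2 : Set (List Q)}

lemma StandingSetup.finiteQ (hs : StandingSetup δ ρ c O2) : Finite Q := by
  by_contra h
  rw [not_finite_iff_infinite] at h
  have := hs.card_three
  rw [Nat.card_eq_zero_of_infinite] at this
  omega

lemma orbit_full (hs : StandingSetup δ ρ c O2) {u : List Q} (hu : u.length = c) :
    orbit δ ρ u = {v : List Q | v.length = c} := by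
  ext v
  exact ⟨fun hv => by simpa [hu] using InOrbit.length_eq hv,
         fun hv => hs.trans_c u v hu hv⟩

lemma O2_mem_length (hs : StandingSetup δ ρ c O2) {V : List Q} (hV : V ∈ O2) :
    V.length = c + 1 := by
  obtain ⟨w₀, hw₀len, hw₀⟩ := hs.O2_is_orbit
  rw [hw₀] at hV
  rw [InOrbit.length_eq hV, hw₀len]

lemma orbit_eq_O2 (hs : StandingSetup δ ρ c O2) {V : List Q} (hV : V ∈ O2) :
    orbit δ ρ V = O2 := by
  haveI := hs.finiteQ
  obtain ⟨w₀, hw₀len, hw₀⟩ := hs.O2_is_orbit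
  rw [hw₀] at hV ⊢
  exact (orbit_eq hs.reversible hV).symm

lemma O2_closed (hs : StandingSetup δ ρ c O2) {a b : List Q} (ha : a ∈ O2)
    (hab : InOrbit δ ρ a b) : b ∈ O2 := by
  rw [← orbit_eq_O2 hs ha]; exact hab

lemma label_of_mem_O2 (hs : StandingSetup δ ρ c O2) {u : List Q} {x : Q}
    (hu : u.length = c) (hmem : u ++ [x] ∈ O2) : label δ ρ u x = 2 := by
  haveI := hs.finiteQ
  have horb : orbit δ ρ (u ++ [x]) = O2 := orbit_eq_O2 hs hmem
  have h1 := orbit_ncard_concat (δ := δ) (ρ := ρ) hs.reversible u x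
  rw [horb, hs.O2_card, orbit_full hs hu, ncard_setOf_len hs.card_three] at h1
  have hpow : 0 < 3 ^ c := pow_pos (by norm_num) c
  exact (Nat.eq_of_mul_eq_mul_right hpow h1.symm)

lemma label_of_not_mem_O2 (hs : StandingSetup δ ρ c O2) {u : List Q} {x : Q}
    (hu : u.length = c) (hmem : u ++ [x] ∉ O2) : label δ ρ u x = 1 := by
  haveI := hs.finiteQ
  obtain ⟨w₁, hw₁len, hw₁⟩ := hs.other_is_orbit
  have hmem' : u ++ [x] ∈ orbit δ ρ w₁ := by
    rw [hw₁]
    exact ⟨by simp [hu], hmem⟩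
  have horb : orbit δ ρ (u ++ [x]) = orbit δ ρ w₁ := (orbit_eq hs.reversible hmem').symm
  have h1 := orbit_ncard_concat (δ := δ) (ρ := ρ) hs.reversible u x
  rw [horb, hw₁, hs.other_card, orbit_full hs hu, ncard_setOf_len hs.card_three] at h1
  have hpow : 0 < 3 ^ c := pow_pos (by norm_num) c
  exact Nat.eq_of_mul_eq_mul_right hpow (h1.symm.trans (one_mul (3^c)).symm)

lemma fiber_O2_card (hs : StandingSetup δ ρ c O2) {t : List Q} (ht : t.length = c) :
    {z : Q | t ++ [z] ∈ O2}.ncard = 2 := by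
  haveI := hs.finiteQ
  obtain ⟨w₀, hw₀len, hw₀⟩ := hs.O2_is_orbit
  have hw₀ne : w₀ ≠ [] := by intro h; rw [h] at hw₀len; simp at hw₀len
  have hu₀len : w₀.dropLast.length = c := by rw [List.length_dropLast, hw₀len]; rfl
  have hdec : w₀.dropLast ++ [w₀.getLast hw₀ne] = w₀ := List.dropLast_concat_getLast hw₀ne
  have hIO : InOrbit δ ρ t w₀.dropLast := hs.trans_c t w₀.dropLast ht hu₀len
  have hcl : ∀ ⦃a b : List Q⦄, a ∈ O2 → InOrbit δ ρ a b → b ∈ O2 :=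
    fun a b ha hab => O2_closed hs ha hab
  rw [fiber_card_eq O2 hcl hIO hs.reversible]
  have hw₀O2 : w₀ ∈ O2 := by rw [hw₀]; exact InOrbit.refl w₀
  have hset : {z : Q | w₀.dropLast ++ [z] ∈ O2} = LSet δ ρ w₀.dropLast (w₀.getLast hw₀ne) := by
    ext z
    simp only [LSet, Set.mem_setOf_eq, hdec]
    constructor
    · intro hz
      rw [← orbit_eq_O2 hs hw₀O2] at hz; exact hz
    · intro hz; exact O2_closed hs hw₀O2 hz
  rw [hset, ← label_eq_ncard_LSet]
  apply label_of_mem_O2 hs hu₀len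
  rw [hdec]; exact hw₀O2

lemma orbital_infix {W V : List Q} (hW : Orbital c O2 W) (hV : V <:+: W) :
    Orbital c O2 V := fun f hf hfV => hW f hf (hfV.trans hV)

lemma orbital_closed (hs : StandingSetup δ ρ c O2) {W W' : List Q}
    (hW : Orbital c O2 W) (h : InOrbit δ ρ W W') : Orbital c O2 W' := by
  obtain ⟨s, hsW⟩ := h
  intro f hf hinf
  obtain ⟨a, b, hab⟩ := hinf
  have hlen : W'.length = W.length := by rw [← hsW, dWord_length]
  have hlen2 : a.length + (f.length + b.length) = W.length := by
    rw [← hlen, ← hab]; simp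
  have h1 : dWord δ ρ s (W.take a.length ++ W.drop a.length)
      = dWord δ ρ s (W.take a.length)
        ++ dWord δ ρ (gw δ ρ (W.take a.length) s) (W.drop a.length) :=
    dWord_append δ ρ s _ _
  rw [List.take_append_drop] at h1
  have htlen : (W.take a.length).length = a.length := by
    rw [List.length_take]; exact min_eq_left (by omega)
  have hsplit1 : a = dWord δ ρ s (W.take a.length) ∧
      f ++ b = dWord δ ρ (gw δ ρ (W.take a.length) s) (W.drop a.length) := by
    have heq : a ++ (f ++ b)
        = dWord δ ρ s (W.take a.length)
          ++ dWord δ ρ (gw δ ρ (W.take a.length) s) (W.drop a.length) := by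
      rw [← h1, hsW, ← hab]; simp
    exact List.append_inj heq (by rw [dWord_length, htlen])
  set R := W.drop a.length with hR
  set s₂ := gw δ ρ (W.take a.length) s with hs₂
  have h2 : dWord δ ρ s₂ (R.take f.length ++ R.drop f.length)
      = dWord δ ρ s₂ (R.take f.length)
        ++ dWord δ ρ (gw δ ρ (R.take f.length) s₂) (R.drop f.length) :=
    dWord_append δ ρ s₂ _ _
  rw [List.take_append_drop] at h2
  have hRlen : R.length = f.length + b.length := by rw [hR, List.length_drop]; omega
  have htlen2 : (R.take f.length).length = f.length := by
    rw [List.length_take]; exact min_eq_left (by omega)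
  have hsplit2 : f = dWord δ ρ s₂ (R.take f.length) := by
    have h3 : f ++ b = dWord δ ρ s₂ (R.take f.length)
        ++ dWord δ ρ (gw δ ρ (R.take f.length) s₂) (R.drop f.length) := by
      rw [← h2]; exact hsplit1.2
    exact (List.append_inj h3 (by rw [dWord_length, htlen2])).1
  have hg_infix : R.take f.length <:+: W :=
    ((List.take_prefix _ _).isInfix).trans ((List.drop_suffix _ _).isInfix)
  have hg_len : (R.take f.length).length = c + 1 := by rw [htlen2, hf]
  have hgO2 : R.take f.length ∈ O2 := hW _ hg_len hg_infix
  exact O2_closed hs hgO2 ⟨s₂, hsplit2.symm⟩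

lemma orbital_extend {w : List Q} {z : Q} (hw : Orbital c O2 w)
    (hl : c ≤ w.length) (hwin : w.drop (w.length - c) ++ [z] ∈ O2) :
    Orbital c O2 (w ++ [z]) := by
  intro f hf hinf
  obtain ⟨a, b, hab⟩ := hinf
  rcases List.eq_nil_or_concat b with rfl | ⟨b', y, rfl⟩
  · rw [List.append_nil] at hab
    have hlen : a.length + f.length = w.length + 1 := by
      rw [← List.length_append, hab]; simp
    have hal : a.length = w.length - c := by omega
    have hfd : f = List.drop a.length (w ++ [z]) := by
      rw [← hab, List.drop_left]
    rw [hfd, List.drop_append_of_le_length (by omega), hal]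
    exact hwin
  · rw [List.concat_eq_append] at hab
    have heq : (a ++ f ++ b') ++ [y] = w ++ [z] := by rw [← hab]; simp
    have h2 := (List.append_inj' heq rfl).1
    exact hw f hf ⟨a, b', h2⟩

lemma orbital_iff_mem_O2 {V : List Q} (hVlen : V.length = c + 1) :
    Orbital c O2 V ↔ V ∈ O2 := by
  constructor
  · intro h; exact h V hVlen (List.infix_refl V)
  · intro h f hf hinf
    have hfV : f = V := hinf.sublist.eq_of_length (by rw [hf, hVlen])
    rwa [hfV]

/-- The set of orbital words of length `n`. -/
def orbSet (c : ℕ) (O2 : Set (List Q)) (n : ℕ) : Set (List Q) :=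
  {W : List Q | W.length = n ∧ Orbital c O2 W}

lemma orbSet_finite [Finite Q] (n : ℕ) : (orbSet c O2 n : Set (List Q)).Finite :=
  (finite_setOf_len n).subset (fun _ h => h.1)

lemma dropLast_mem_orbSet {W : List Q} {n : ℕ} (hW : W ∈ orbSet c O2 (n+1)) :
    W.dropLast ∈ orbSet c O2 n := by
  refine ⟨by rw [List.length_dropLast, hW.1]; omega, ?_⟩
  apply orbital_infix hW.2
  rw [List.dropLast_eq_take]
  exact (List.take_prefix _ _).isInfix

lemma fiber_orbSet {b : List Q} {n : ℕ} (hb : b ∈ orbSet c O2 n) (hn : c ≤ n) :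
    {z : Q | b ++ [z] ∈ orbSet c O2 (n+1)} = {z : Q | b.drop (n - c) ++ [z] ∈ O2} := by
  obtain ⟨hblen, hborb⟩ := hb
  ext z
  simp only [Set.mem_setOf_eq]
  have hwin : b.drop (n-c) ++ [z] = (b ++ [z]).drop (n-c) :=
    (List.drop_append_of_le_length (by omega)).symm
  constructor
  · intro h
    apply h.2
    · simp only [List.length_append, List.length_drop, hblen, List.length_singleton]
      omega
    · rw [hwin]; exact (List.drop_suffix _ _).isInfix
  · intro h
    refine ⟨by simp [hblen], orbital_extend hborb (by omega) ?_⟩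
    rw [hblen]
    exact h

lemma orbSet_card_succ (hs : StandingSetup δ ρ c O2) {n : ℕ} (hn : c ≤ n) :
    (orbSet c O2 (n+1) : Set (List Q)).ncard = 2 * (orbSet c O2 n : Set (List Q)).ncard := by
  haveI := hs.finiteQ
  apply ncard_fiber_mul _ _ _ (orbSet_finite _) (orbSet_finite _)
  · intro W hW hnil
    rw [hnil] at hW
    have := hW.1
    simp at this
  · exact fun W hW => dropLast_mem_orbSet hW
  · intro b hb
    rw [fiber_orbSet hb hn]
    apply fiber_O2_card hs
    rw [List.length_drop, hb.1]
    omega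

lemma InOrbit_cons_decomp {a : Q} {l m : List Q} (h : InOrbit δ ρ (a :: l) m) :
    ∃ (a' : Q) (l' : List Q), m = a' :: l' ∧ InOrbit δ ρ l l' := by
  obtain ⟨s, hs⟩ := h
  have h1 : dWord δ ρ s ([a] ++ l) = dWord δ ρ s [a] ++ dWord δ ρ (gw δ ρ [a] s) l :=
    dWord_append δ ρ s _ _
  obtain ⟨a', ha'⟩ := exists_singleton_dWord (δ := δ) (ρ := ρ) s a
  refine ⟨a', dWord δ ρ (gw δ ρ [a] s) l, ?_, ⟨_, rfl⟩⟩
  rw [← hs]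
  show dWord δ ρ s ([a] ++ l) = _
  rw [h1, ha']
  rfl

lemma LSet_cons_subset (a : Q) (u : List Q) (x : Q) :
    LSet δ ρ (a :: u) x ⊆ LSet δ ρ u x := by
  intro z hz
  have hz' : InOrbit δ ρ (a :: (u ++ [x])) (a :: (u ++ [z])) := by
    simpa [LSet] using hz
  obtain ⟨a', l', heq, hIO⟩ := InOrbit_cons_decomp hz'
  injection heq with h1 h2
  rw [← h2] at hIO
  exact hIO

lemma LSet_drop_subset (u : List Q) (x : Q) (k : ℕ) :
    LSet δ ρ u x ⊆ LSet δ ρ (u.drop k) x := by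
  induction k with
  | zero => rw [List.drop_zero]
  | succ k ih =>
    have step : LSet δ ρ (u.drop k) x ⊆ LSet δ ρ (u.drop (k+1)) x := by
      have h2 : u.drop (k+1) = List.drop 1 (u.drop k) := List.drop_drop.symm
      cases hdk : u.drop k with
      | nil => rw [h2, hdk]; exact fun z hz => hz
      | cons a t =>
        rw [h2, hdk]
        exact LSet_cons_subset a t x
    exact fun z hz => step (ih hz)

lemma label_mono_drop [Finite Q] (u : List Q) (x : Q) (k : ℕ) :
    label δ ρ u x ≤ label δ ρ (u.drop k) x := by
  rw [label_eq_ncard_LSet, label_eq_ncard_LSet]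
  exact Set.ncard_le_ncard (LSet_drop_subset u x k) (Set.toFinite _)

lemma label_le_two (hs : StandingSetup δ ρ c O2) {u : List Q} {x : Q} (hc : c ≤ u.length) :
    label δ ρ u x ≤ 2 := by
  haveI := hs.finiteQ
  have h := label_mono_drop (δ := δ) (ρ := ρ) u x (u.length - c)
  have hlen : (u.drop (u.length - c)).length = c := by rw [List.length_drop]; omega
  by_cases hmem : u.drop (u.length - c) ++ [x] ∈ O2
  · rw [label_of_mem_O2 hs hlen hmem] at h; exact h
  · rw [label_of_not_mem_O2 hs hlen hmem] at h; omega

lemma label_pos [Finite Q] (u : List Q) (x : Q) : 1 ≤ label δ ρ u x := by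
  rw [label_eq_ncard_LSet]
  exact (Set.ncard_pos (Set.toFinite _)).mpr ⟨x, mem_LSet_self u x⟩

end Aux

/-- All orbital words of length `n` have label `2`, and they form a single orbit. -/
def GoodL (δ : X → Q → Q) (ρ : Q → X → X) (c : ℕ) (O2 : Set (List Q)) (n : ℕ) : Prop :=
  (∀ W ∈ orbSet c O2 n, ∀ (u : List Q) (x : Q), W = u ++ [x] → label δ ρ u x = 2) ∧
  (∀ W ∈ orbSet c O2 n, ∀ W' ∈ orbSet c O2 n, InOrbit δ ρ W W')

/-- All orbital words of length `n` have label `1`. -/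
def DeadL (δ : X → Q → Q) (ρ : Q → X → X) (c : ℕ) (O2 : Set (List Q)) (n : ℕ) : Prop :=
  ∀ W ∈ orbSet c O2 n, ∀ (u : List Q) (x : Q), W = u ++ [x] → label δ ρ u x = 1

section Main

variable {δ : X → Q → Q} {ρ : Q → X → X} {c : ℕ} {O2 : Set (List Q)}

lemma good_base (hs : StandingSetup δ ρ c O2) : GoodL δ ρ c O2 (c+1) := by
  haveI := hs.finiteQ
  have hO2eq : ∀ W ∈ orbSet c O2 (c+1), W ∈ O2 := fun W hW =>
    (orbital_iff_mem_O2 hW.1).mp hW.2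
  constructor
  · rintro W hW u x rfl
    have hu : u.length = c := by have h := hW.1; simp at h; omega
    exact label_of_mem_O2 hs hu (hO2eq _ hW)
  · intro W hW W' hW'
    have h1 := hO2eq _ hW
    have h2 := hO2eq _ hW'
    have h3 := orbit_eq_O2 hs h1
    rw [← h3] at h2
    exact h2

lemma dead_step (hs : StandingSetup δ ρ c O2) {n : ℕ} (hn : 1 ≤ n)
    (hD : DeadL δ ρ c O2 n) : DeadL δ ρ c O2 (n+1) := by
  haveI := hs.finiteQ
  rintro W hW u x rfl
  have hu : u.length = n := by have h := hW.1; simp at h; omega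
  have hune : u ≠ [] := by intro h; rw [h] at hu; simp at hu; omega
  obtain ⟨a, t, rfl⟩ := List.exists_cons_of_ne_nil hune
  have htail : t ++ [x] ∈ orbSet c O2 n := by
    constructor
    · simp at hu ⊢; omega
    · apply orbital_infix hW.2
      have heq : t ++ [x] = ((a :: t) ++ [x]).drop 1 := rfl
      rw [heq]
      exact (List.drop_suffix _ _).isInfix
  have hlab := hD _ htail t x rfl
  rw [label_eq_ncard_LSet] at hlab
  obtain ⟨z₀, hz₀⟩ := Set.ncard_eq_one.mp hlab
  have hx0 : x ∈ LSet δ ρ t x := mem_LSet_self t x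
  rw [hz₀] at hx0
  have hz₀x : z₀ = x := hx0.symm
  have hsub := LSet_cons_subset (δ := δ) (ρ := ρ) a t x
  rw [hz₀, hz₀x] at hsub
  rw [label_eq_ncard_LSet]
  have hseq : LSet δ ρ (a :: t) x = {x} :=
    subset_antisymm hsub (Set.singleton_subset_iff.mpr (mem_LSet_self _ _))
  rw [hseq, Set.ncard_singleton]

lemma good_step (hs : StandingSetup δ ρ c O2) {n : ℕ} (hn : c + 1 ≤ n)
    (hG : GoodL δ ρ c O2 n) : GoodL δ ρ c O2 (n+1) ∨ DeadL δ ρ c O2 (n+1) := by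
  haveI := hs.finiteQ
  by_cases hD : DeadL δ ρ c O2 (n+1)
  · exact Or.inr hD
  left
  rw [DeadL] at hD
  push_neg at hD
  obtain ⟨W₀, hW₀, u₀, x₀, hdec, hlabne⟩ := hD
  subst hdec
  have hu₀len : u₀.length = n := by have h := hW₀.1; simp at h; omega
  have hu₀mem : u₀ ∈ orbSet c O2 n :=
    ⟨hu₀len, orbital_infix hW₀.2 (List.prefix_append u₀ [x₀]).isInfix⟩
  have hlab2 : label δ ρ u₀ x₀ = 2 := by
    have h1 := label_le_two hs (u := u₀) (x := x₀) (by omega)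
    have h2 := label_pos (δ := δ) (ρ := ρ) u₀ x₀
    omega
  have horbu : orbit δ ρ u₀ = orbSet c O2 n := by
    apply subset_antisymm
    · intro V hV
      exact ⟨by rw [InOrbit.length_eq hV, hu₀len], orbital_closed hs hu₀mem.2 hV⟩
    · intro V hV
      exact hG.2 u₀ hu₀mem V hV
  have hWorbsub : orbit δ ρ (u₀ ++ [x₀]) ⊆ orbSet c O2 (n+1) := by
    intro V hV
    exact ⟨by rw [InOrbit.length_eq hV, hW₀.1], orbital_closed hs hW₀.2 hV⟩
  have hcard : (orbit δ ρ (u₀ ++ [x₀])).ncard = (orbSet c O2 (n+1) : Set (List Q)).ncard := by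
    rw [orbit_ncard_concat hs.reversible, hlab2, horbu, orbSet_card_succ hs (by omega)]
  have horbW : orbit δ ρ (u₀ ++ [x₀]) = orbSet c O2 (n+1) :=
    Set.eq_of_subset_of_ncard_le hWorbsub (le_of_eq hcard.symm) (orbSet_finite _)
  constructor
  · rintro W hW u x rfl
    have hulen : u.length = n := by have h := hW.1; simp at h; omega
    have humem : u ∈ orbSet c O2 n :=
      ⟨hulen, orbital_infix hW.2 (List.prefix_append u [x]).isInfix⟩
    have horbu' : orbit δ ρ u = orbSet c O2 n := by
      apply subset_antisymm
      · intro V hV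
        exact ⟨by rw [InOrbit.length_eq hV, hulen], orbital_closed hs humem.2 hV⟩
      · intro V hV
        exact hG.2 u humem V hV
    have hWmem : u ++ [x] ∈ orbit δ ρ (u₀ ++ [x₀]) := by rw [horbW]; exact hW
    have horbeq : orbit δ ρ (u ++ [x]) = orbSet c O2 (n+1) :=
      (orbit_eq hs.reversible hWmem).symm.trans horbW
    have hcard2 : (orbSet c O2 (n+1) : Set (List Q)).ncard
        = label δ ρ u x * (orbSet c O2 n : Set (List Q)).ncard := by
      rw [← horbeq, orbit_ncard_concat hs.reversible, horbu']
    rw [orbSet_card_succ hs (by omega)] at hcard2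
    have hKpos : 0 < (orbSet c O2 n : Set (List Q)).ncard := by
      rw [Set.ncard_pos (orbSet_finite _)]
      exact ⟨u₀, hu₀mem⟩
    exact Nat.eq_of_mul_eq_mul_right hKpos hcard2.symm
  · intro W hW W' hW'
    rw [← horbW] at hW hW'
    exact (InOrbit.symm hs.reversible hW).trans hW'

lemma dichotomy (hs : StandingSetup δ ρ c O2) (k : ℕ) :
    GoodL δ ρ c O2 (c+1+k) ∨ DeadL δ ρ c O2 (c+1+k) := by
  induction k with
  | zero => exact Or.inl (good_base hs)
  | succ k ih =>
    have hstep : c + 1 + (k+1) = (c+1+k) + 1 := by omega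
    rw [hstep]
    rcases ih with h | h
    · exact good_step hs (by omega) h
    · exact Or.inr (dead_step hs (by omega) h)

lemma dead_up (hs : StandingSetup δ ρ c O2) {m : ℕ} (hm : 1 ≤ m)
    (hD : DeadL δ ρ c O2 m) (j : ℕ) : DeadL δ ρ c O2 (m + j) := by
  induction j with
  | zero => exact hD
  | succ j ih =>
    have h := dead_step hs (n := m + j) (by omega) ih
    have heq : m + (j+1) = (m+j)+1 := by omega
    rwa [heq]

end Main

/-- Under the standing setup, if the lengths of the 2-blocks are
bounded with supremum `N`, then for every orbital word `w` of length at least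
`c + N + 1`, the three words `w ++ [x]`, `x ∈ Q`, lie in pairwise distinct orbits. -/
theorem three_edges_below_two_blocks
    {Q X : Type*} (δ : X → Q → Q) (ρ : Q → X → X) (c : ℕ) (O2 : Set (List Q))
    (hs : StandingSetup δ ρ c O2) (N : ℕ)
    (hbdd₁ : ∃ (u : List Q) (v : ℕ → Q),
      ∀ i < N, label δ ρ (u ++ pref v i) (v i) = 2)
    (hbdd₂ : ¬ ∃ (u : List Q) (v : ℕ → Q),
      ∀ i < N + 1, label δ ρ (u ++ pref v i) (v i) = 2)
    (w : List Q) (hw : Orbital c O2 w) (hlen : c + N + 1 ≤ w.length) :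
    ∀ x y : Q, x ≠ y → ¬ InOrbit δ ρ (w ++ [x]) (w ++ [y]) := by
  intro x y hxy hIO
  haveI := hs.finiteQ
  have hx2 : 2 ≤ label δ ρ w x := by
    rw [label_eq_ncard_LSet]
    have hsub : ({x, y} : Set Q) ⊆ LSet δ ρ w x := by
      intro z hz
      rcases hz with hz | hz
      · rw [hz]; exact mem_LSet_self w x
      · rw [Set.mem_singleton_iff] at hz
        rw [hz]
        exact hIO
    calc 2 = ({x, y} : Set Q).ncard := (Set.ncard_pair hxy).symm
      _ ≤ _ := Set.ncard_le_ncard hsub (Set.toFinite _)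
  have htlen : (w.drop (w.length - c)).length = c := by
    rw [List.length_drop]; omega
  have htx : w.drop (w.length - c) ++ [x] ∈ O2 := by
    by_contra hmem
    have h1 := label_of_not_mem_O2 hs htlen hmem
    have h2 := label_mono_drop (δ := δ) (ρ := ρ) w x (w.length - c)
    rw [h1] at h2
    omega
  have hWorb : Orbital c O2 (w ++ [x]) := orbital_extend hw (by omega) htx
  have hWmem : w ++ [x] ∈ orbSet c O2 (w.length + 1) := ⟨by simp, hWorb⟩
  have hnotdead : ¬ DeadL δ ρ c O2 (w.length + 1) := by
    intro hD
    have h1 := hD _ hWmem w x rfl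
    omega
  have hGood : ∀ m, c + 1 ≤ m → m ≤ w.length + 1 → GoodL δ ρ c O2 m := by
    intro m hm1 hm2
    obtain ⟨k, rfl⟩ : ∃ k, m = c + 1 + k := ⟨m - (c + 1), by omega⟩
    rcases dichotomy hs k with h | h
    · exact h
    · exfalso
      apply hnotdead
      have h2 := dead_up hs (by omega) h ((w.length + 1) - (c + 1 + k))
      have heq : (c + 1 + k) + ((w.length + 1) - (c + 1 + k)) = w.length + 1 := by omega
      rwa [heq] at h2
  set v : ℕ → Q := fun i => (w ++ [x]).getD (c + i) x with hv
  have hpref : ∀ j, j ≤ N + 1 → w.take c ++ pref v j = (w ++ [x]).take (c + j) := by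
    intro j
    induction j with
    | zero =>
      intro _
      show w.take c ++ pref v 0 = (w ++ [x]).take c
      rw [List.take_append_of_le_length (by omega)]
      simp [pref]
    | succ j ih =>
      intro hj
      have hij := ih (by omega)
      have hrange : pref v (j + 1) = pref v j ++ [v j] := by
        simp [pref, List.range_succ]
      have hlt : c + j < (w ++ [x]).length := by simp; omega
      have h1 : (w ++ [x])[c + j]? = some ((w ++ [x])[c + j]) :=
        List.getElem?_eq_getElem hlt
      have h2 : v j = (w ++ [x])[c + j] := List.getD_eq_getElem _ _ hlt
      rw [hrange, ← List.append_assoc, hij,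
        show c + (j + 1) = (c + j) + 1 from rfl, List.take_succ, h1, h2]
      rfl
  apply hbdd₂
  refine ⟨w.take c, v, ?_⟩
  intro i hi
  have hnode : (w ++ [x]).take (c + i + 1) = (w.take c ++ pref v i) ++ [v i] := by
    have hb := hpref (i + 1) (by omega)
    have hrange : pref v (i + 1) = pref v i ++ [v i] := by
      simp [pref, List.range_succ]
    rw [show c + i + 1 = c + (i + 1) from by omega, ← hb, hrange, ← List.append_assoc]
  have hmem : (w ++ [x]).take (c + i + 1) ∈ orbSet c O2 (c + i + 1) := by
    constructor
    · rw [List.length_take]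
      simp
      omega
    · exact orbital_infix hWorb ((List.take_prefix _ _).isInfix)
  have hG := hGood (c + i + 1) (by omega) (by omega)
  exact hG.1 _ hmem _ _ hnode

end MealyFormal
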